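/- For all integers 0 ≤ j ≤ n and all x ∈ [0,1], the power [x]_q^j is the following linear combination of q-Bernstein polynomials: ∑_{k=j}^n (C(k,j)/C(n,j))·B_{k,n}(x,q) = [x]_q^j. -/

import Mathlib

/-!
Since `[1-x]_{1/q} = 1 - [x]_q`, with `t = [x]_q` the q-Bernstein polynomials are the classical
Bernstein basis `C(n,k) t^k (1-t)^(n-k)`. The identity `C(n,k) C(k,j) = C(n,j) C(n-j,k-j)` then
pulls out `C(n,j) t^j`, and what remains is the binomial expansion of `(t + (1 - t))^(n-j) = 1`.
-/

/-- The q-number `[x]_q = (1 - q^x)/(1 - q)` for real `x`. -/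
noncomputable def qNum (q x : ℝ) : ℝ := (1 - q ^ x) / (1 - q)

/-- The q-Bernstein polynomial `B_{k,n}(x,q) = C(n,k)·[x]_q^k·[1-x]_{1/q}^{n-k}`. -/
noncomputable def qBernstein (q : ℝ) (k n : ℕ) (x : ℝ) : ℝ :=
  (n.choose k : ℝ) * qNum q x ^ k * qNum q⁻¹ (1 - x) ^ (n - k)

theorem qNum_inv_one_sub {q : ℝ} (hq : 0 < q) (hq1 : q ≠ 1) (x : ℝ) :
    qNum q⁻¹ (1 - x) = 1 - qNum q x := by
  have hq1' : 1 - q ≠ 0 := sub_ne_zero.mpr hq1.symm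
  have hpow : q⁻¹ ^ (1 - x) = q ^ x / q := by
    rw [Real.inv_rpow hq.le, ← Real.rpow_neg hq.le, neg_sub, Real.rpow_sub hq, Real.rpow_one]
  rw [qNum, qNum, hpow]
  field_simp
  ring

theorem sum_Icc_choose_mul_pow_mul_one_sub_pow {R : Type*} [CommRing R] (t : R) {j n : ℕ}
    (hj : j ≤ n) :
    ∑ k ∈ Finset.Icc j n, (n.choose k * k.choose j : R) * t ^ k * (1 - t) ^ (n - k)
      = n.choose j * t ^ j := by
  have hterm : ∀ i ∈ Finset.range (n - j + 1),
      (n.choose (j + i) * (j + i).choose j : R) * t ^ (j + i) * (1 - t) ^ (n - (j + i))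
        = n.choose j * t ^ j * (t ^ i * (1 - t) ^ (n - j - i) * (n - j).choose i) := by
    intro i _
    have hchoose := Nat.choose_mul (n := n) (k := j + i) (s := j) (Nat.le_add_right j i)
    rw [Nat.add_sub_cancel_left] at hchoose
    rw [← Nat.cast_mul, hchoose, Nat.cast_mul, pow_add, Nat.sub_sub]
    ring
  rw [← Finset.Ico_add_one_right_eq_Icc, Finset.sum_Ico_eq_sum_range, Nat.sub_add_comm hj,
    Finset.sum_congr rfl hterm, ← Finset.mul_sum, ← add_pow, add_sub_cancel, one_pow, mul_one]

theorem qBernstein_power_representation_general (q : ℝ) (hq : 0 < q) (hq1 : q < 1)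
    (n j : ℕ) (hj : j ≤ n) (x : ℝ) :
    ∑ k ∈ Finset.Icc j n, ((k.choose j : ℝ) / (n.choose j : ℝ)) * qBernstein q k n x
      = qNum q x ^ j := by
  have hnj : (n.choose j : ℝ) ≠ 0 := by exact_mod_cast (Nat.choose_pos hj).ne'
  calc ∑ k ∈ Finset.Icc j n, ((k.choose j : ℝ) / (n.choose j : ℝ)) * qBernstein q k n x
      = (∑ k ∈ Finset.Icc j n, (n.choose k * k.choose j : ℝ) * qNum q x ^ k
          * (1 - qNum q x) ^ (n - k)) / n.choose j := by
        rw [Finset.sum_div]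
        refine Finset.sum_congr rfl fun k _ => ?_
        rw [qBernstein, qNum_inv_one_sub hq hq1.ne]
        ring
    _ = qNum q x ^ j := by
        rw [sum_Icc_choose_mul_pow_mul_one_sub_pow _ hj, mul_div_cancel_left₀ _ hnj]

/-- `∑_{k=j}^n (C(k,j)/C(n,j))·B_{k,n}(x,q) = [x]_q^j`. -/
theorem qBernstein_power_representation (q : ℝ) (hq : 0 < q) (hq1 : q < 1)
    (n j : ℕ) (hj : j ≤ n) (x : ℝ) (hx : x ∈ Set.Icc (0 : ℝ) 1) :
    ∑ k ∈ Finset.Icc j n, ((k.choose j : ℝ) / (n.choose j : ℝ)) * qBernstein q k n x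
      = qNum q x ^ j :=
  qBernstein_power_representation_general q hq hq1 n j hj x
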